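/- arXiv:1609.03989 — 4 statements merged into one kernel-verified Lean document; each statement's English description precedes it below -/
import Mathlib

section
/- Let E, v, w ∈ ℝ^3 (with E playing the role of E(x), v + w the perturbation direction) and p > 2, t ≥ 0. Define φ(t) = -⟨|E|^{p-2}E, ((t^2-1)/2)E + t(v+w)⟩ - (1/p)|E|^p + (1/p)|tE + v + w|^p. Then φ(t) ≥ 0 for all t ≥ 0, with strict inequality unless E = tE + v + w (when v + w ≠ 0 or t ≠ 1). -/
/-!
Write `a = ‖E‖`, `u = tE + v + w`, `r = ‖u‖`. Expanding the inner product splits `φ(t)` into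
three nonnegative pieces,
`φ = [r^p/p + (1/2 - 1/p) a^p - r² a^(p-2)/2] + a^(p-2) (t a - r)²/2 + t a^(p-2) (a r - ⟪E, u⟫)`:
the first is weighted AM–GM for `r^p` and `a^p` with weights `2/p` and `1 - 2/p`, the second is a
square and the third is Cauchy–Schwarz. If all three vanish then `r = a`, and either `a = 0`
(so `E = u = 0`) or `t = 1` and `⟪E, u⟫ = ‖E‖ ‖u‖ = a²`, which forces `‖E - u‖ = 0`.
-/

open RealInnerProductSpace

namespace Real

variable {p r a : ℝ}

lemma rpow_two_div_mul_rpow_sub_two_div (hp : 0 < p) (hr : 0 ≤ r) (ha : 0 ≤ a) :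
    (r ^ p) ^ (2 / p) * (a ^ p) ^ ((p - 2) / p) = r ^ 2 * a ^ (p - 2) := by
  rw [← rpow_mul hr, ← rpow_mul ha, mul_div_cancel₀ _ hp.ne', mul_div_cancel₀ _ hp.ne',
    rpow_two]

lemma sq_mul_rpow_sub_two_le (hp : 2 ≤ p) (hr : 0 ≤ r) (ha : 0 ≤ a) :
    r ^ 2 * a ^ (p - 2) ≤ 2 / p * r ^ p + (p - 2) / p * a ^ p := by
  have hp0 : 0 < p := by linarith
  rw [← rpow_two_div_mul_rpow_sub_two_div hp0 hr ha]
  exact geom_mean_le_arith_mean2_weighted (by positivity) (div_nonneg (by linarith) hp0.le)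
    (by positivity) (by positivity) (by field_simp; ring)

lemma sq_mul_rpow_sub_two_lt (hp : 2 < p) (hr : 0 ≤ r) (ha : 0 ≤ a) (hra : r ≠ a) :
    r ^ 2 * a ^ (p - 2) < 2 / p * r ^ p + (p - 2) / p * a ^ p := by
  have hp0 : 0 < p := by linarith
  rw [← rpow_two_div_mul_rpow_sub_two_div hp0 hr ha]
  refine (geom_mean_lt_arith_mean2_weighted_iff_of_pos (by positivity)
    (div_pos (by linarith) hp0) (by positivity) (by positivity) (by field_simp; ring)).2 ?_
  exact fun h => hra ((rpow_left_injOn hp0.ne').eq_iff hr ha |>.1 h)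

end Real

section NehariGap

variable {F : Type*} [NormedAddCommGroup F] [InnerProductSpace ℝ F]

/-- The integrand `φ(t)` of condition (B3) for `J_λ`, with `d = v + w`. -/
noncomputable def nehariGap (p t : ℝ) (E d : F) : ℝ :=
  -⟪‖E‖ ^ (p - 2) • E, ((t ^ 2 - 1) / 2) • E + t • d⟫ - (1 / p) * ‖E‖ ^ p
    + (1 / p) * ‖t • E + d‖ ^ p

lemma nehariGap_eq {p : ℝ} (hp : p ≠ 0) (t : ℝ) (E d : F) :
    nehariGap p t E d =
      (2 / p * ‖t • E + d‖ ^ p + (p - 2) / p * ‖E‖ ^ p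
          - ‖t • E + d‖ ^ 2 * ‖E‖ ^ (p - 2)) / 2
        + ‖E‖ ^ (p - 2) * (t * ‖E‖ - ‖t • E + d‖) ^ 2 / 2
        + t * ‖E‖ ^ (p - 2) * (‖E‖ * ‖t • E + d‖ - ⟪E, t • E + d⟫) := by
  have hpow : ‖E‖ ^ p = ‖E‖ ^ (p - 2) * ‖E‖ ^ 2 := by
    rw [← Real.rpow_add_natCast' (norm_nonneg E) (by simpa using hp)]
    norm_num
  simp only [nehariGap, real_inner_smul_left, inner_add_right, real_inner_smul_right,
    real_inner_self_eq_norm_sq]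
  rw [hpow]
  field_simp
  ring

lemma nehariGap_nonneg {p t : ℝ} (hp : 2 ≤ p) (ht : 0 ≤ t) (E d : F) :
    0 ≤ nehariGap p t E d := by
  set u := t • E + d
  have hyoung := Real.sq_mul_rpow_sub_two_le hp (norm_nonneg u) (norm_nonneg E)
  have hsq := mul_nonneg (Real.rpow_nonneg (norm_nonneg E) (p - 2)) (sq_nonneg (t * ‖E‖ - ‖u‖))
  have hcs := mul_nonneg (mul_nonneg ht (Real.rpow_nonneg (norm_nonneg E) (p - 2)))
    (sub_nonneg.2 (real_inner_le_norm E u))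
  rw [nehariGap_eq (by linarith)]
  linarith

lemma nehariGap_pos {p t : ℝ} (hp : 2 < p) (ht : 0 ≤ t) {E d : F} (hE : E ≠ t • E + d) :
    0 < nehariGap p t E d := by
  set u := t • E + d
  have hyoung := Real.sq_mul_rpow_sub_two_le hp.le (norm_nonneg u) (norm_nonneg E)
  have hsq := mul_nonneg (Real.rpow_nonneg (norm_nonneg E) (p - 2)) (sq_nonneg (t * ‖E‖ - ‖u‖))
  have hcs := mul_nonneg (mul_nonneg ht (Real.rpow_nonneg (norm_nonneg E) (p - 2)))
    (sub_nonneg.2 (real_inner_le_norm E u))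
  rw [nehariGap_eq (by linarith)]
  by_cases hru : ‖u‖ = ‖E‖
  swap
  · linarith [Real.sq_mul_rpow_sub_two_lt hp (norm_nonneg u) (norm_nonneg E) hru]
  have ha : 0 < ‖E‖ := by
    refine (norm_nonneg E).lt_of_ne fun h => hE ?_
    rw [norm_eq_zero.1 h.symm, norm_eq_zero.1 (hru.trans h.symm)]
  have hpow := Real.rpow_pos_of_pos ha (p - 2)
  by_cases ht1 : t = 1
  · have hdist : 0 < ‖E - u‖ ^ 2 := by
      have := norm_pos_iff.2 (sub_ne_zero.2 hE)
      positivity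
    rw [norm_sub_sq_real, hru] at hdist
    have : 0 < t * ‖E‖ ^ (p - 2) * (‖E‖ * ‖u‖ - ⟪E, u⟫) := by
      rw [ht1, one_mul, hru]
      exact mul_pos hpow (by linarith)
    linarith
  · have : 0 < ‖E‖ ^ (p - 2) * (t * ‖E‖ - ‖u‖) ^ 2 := by
      rw [hru, ← sub_one_mul]
      have : t - 1 ≠ 0 := sub_ne_zero.2 ht1
      positivity
    linarith

end NehariGap

/-- Pointwise inequality of Lemma 4.1: for `E, v, w ∈ ℝ³`, `p > 2`, `t ≥ 0`, the quantity
`φ(t) = -⟨|E|^{p-2}E, ((t²-1)/2)E + t(v+w)⟩ - (1/p)|E|^p + (1/p)|tE + v + w|^p`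
is nonnegative, and strictly positive unless `E = tE + v + w`. -/
theorem stmt2 (p t : ℝ) (hp : 2 < p) (ht : 0 ≤ t)
    (E v w : EuclideanSpace ℝ (Fin 3)) :
    0 ≤ -⟪‖E‖ ^ (p - 2) • E, ((t ^ 2 - 1) / 2) • E + t • (v + w)⟫
          - (1 / p) * ‖E‖ ^ p + (1 / p) * ‖t • E + (v + w)‖ ^ p ∧
      (E ≠ t • E + (v + w) →
        0 < -⟪‖E‖ ^ (p - 2) • E, ((t ^ 2 - 1) / 2) • E + t • (v + w)⟫
              - (1 / p) * ‖E‖ ^ p + (1 / p) * ‖t • E + (v + w)‖ ^ p) :=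
  ⟨nehariGap_nonneg hp.le ht E (v + w), nehariGap_pos hp ht⟩
end

section
/- Let X = X⁺ ⊕ X̃ with X⁺ a Hilbert space, and J(u) = (1/2)‖u⁺‖² - I(u) with I ≥ 0. Suppose u is a critical point of J constrained to a set 𝒩 and satisfies, for all t ≥ 0 and ṽ ∈ X̃ with u ≠ tu + ṽ: ((t²-1)/2)I'(u)(u) + tI'(u)(ṽ) + I(u) - I(tu + ṽ) < 0. Then J(u) > J(tu + ṽ) for all t ≥ 0, ṽ ∈ X̃ with tu + ṽ ≠ u, i.e., u is the unique global maximum of J restricted to ℝ⁺u ⊕ X̃. -/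
open RealInnerProductSpace

theorem Submodule.orthogonalProjectionOnto_smul_add_of_mem_orthogonal {𝕜 E : Type*} [RCLike 𝕜]
    [NormedAddCommGroup E] [InnerProductSpace 𝕜 E] (K : Submodule 𝕜 E)
    [K.HasOrthogonalProjection] (t : 𝕜) (u : E) {v : E} (hv : v ∈ Kᗮ) :
    K.orthogonalProjectionOnto (t • u + v) = t • K.orthogonalProjectionOnto u := by
  rw [map_add, map_smul, K.orthogonalProjectionOnto_apply_of_mem_orthogonal hv, add_zero]

theorem stmt13_general {X : Type*} [NormedAddCommGroup X] [InnerProductSpace ℝ X]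
    (Xp : Submodule ℝ X) [Xp.HasOrthogonalProjection]
    (I : X → ℝ) (I' : X → X →L[ℝ] ℝ)
    (J : X → ℝ)
    (hJ : ∀ u : X, J u = 1 / 2 * ‖(Xp.orthogonalProjectionOnto u : X)‖ ^ 2 - I u)
    (u : X)
    (hB3 : ∀ t : ℝ, 0 ≤ t → ∀ v ∈ Xpᗮ, u ≠ t • u + v →
      (t ^ 2 - 1) / 2 * I' u u + t * I' u v + I u - I (t • u + v) < 0)
    (hcrit1 : ‖(Xp.orthogonalProjectionOnto u : X)‖ ^ 2 = I' u u)
    (hcrit2 : ∀ v ∈ Xpᗮ, I' u v = 0) :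
    ∀ t : ℝ, 0 ≤ t → ∀ v ∈ Xpᗮ, t • u + v ≠ u → J (t • u + v) < J u := by
  intro t ht v hv hne
  have hB3' := hB3 t ht v hv hne.symm
  rw [hcrit2 v hv] at hB3'
  have hnorm : ‖(Xp.orthogonalProjectionOnto (t • u + v) : X)‖ ^ 2 = t ^ 2 * I' u u := by
    rw [Xp.orthogonalProjectionOnto_smul_add_of_mem_orthogonal t u hv, Submodule.coe_smul,
      norm_smul, mul_pow, Real.norm_eq_abs, sq_abs, hcrit1]
  rw [hJ, hJ, hnorm, hcrit1]
  linarith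

/-- Uniqueness of the maximum in Proposition 3.1: if `J(u) = ½‖u⁺‖² - I(u)`, `u` is a
critical point of `J` restricted to `ℝu ⊕ X̃` (here `X̃ = X⁺ᗮ`, `u⁺` the orthogonal
projection onto `X⁺`), and condition (B3) holds at `u`, then `u` is the unique global
maximum of `J` on `ℝ⁺u ⊕ X̃`. -/
theorem stmt13 {X : Type*} [NormedAddCommGroup X] [InnerProductSpace ℝ X]
    (Xp : Submodule ℝ X) [Xp.HasOrthogonalProjection]
    (I : X → ℝ) (I' : X → X →L[ℝ] ℝ) (hI : ∀ u, HasFDerivAt I (I' u) u)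
    (hIpos : ∀ u, 0 ≤ I u)
    (J : X → ℝ)
    (hJ : ∀ u : X, J u = 1 / 2 * ‖(Xp.orthogonalProjectionOnto u : X)‖ ^ 2 - I u)
    (u : X)
    (hB3 : ∀ t : ℝ, 0 ≤ t → ∀ v ∈ Xpᗮ, u ≠ t • u + v →
      (t ^ 2 - 1) / 2 * I' u u + t * I' u v + I u - I (t • u + v) < 0)
    (hcrit1 : ‖(Xp.orthogonalProjectionOnto u : X)‖ ^ 2 = I' u u)
    (hcrit2 : ∀ v ∈ Xpᗮ, I' u v = 0) :
    ∀ t : ℝ, 0 ≤ t → ∀ v ∈ Xpᗮ, t • u + v ≠ u → J (t • u + v) < J u :=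
  stmt13_general Xp I I' J hJ u hB3 hcrit1 hcrit2
end

section
/- Suppose J_λ(u) = (1/2)‖u⁺‖² - I_λ(u) is a family of functionals on a Banach space X = X⁺ ⊕ X̃ indexed by λ ∈ I ⊂ ℝ, satisfying 0 < J_{λ₁}(u) - J_{λ₂}(u) ≤ L(λ₁ - λ₂)‖u‖² for λ₁ > λ₂ in I and u ∈ X \ X̃. Then the ground state level map λ ↦ c_λ := inf_{𝒩_λ} J_λ is non-decreasing on I; moreover if c_{λ₂} is attained for every λ ∈ I, then λ ↦ c_λ is strictly increasing. -/
/-! For `u ∈ 𝒩_{λ₁}` pick the point `w = t u + v` of its cone `ℝ⁺u ⊕ X̃` lying on `𝒩_{λ₂}`; then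
`c_{λ₂} ≤ J_{λ₂}(w) < J_{λ₁}(w) ≤ J_{λ₁}(u)`, since `u` maximizes `J_{λ₁}` on its cone.
Taking the infimum over `u` gives monotonicity, and taking `u` a minimizer gives strictness. -/

theorem lt_of_isMax_on_cone_of_mem_lowerBounds {X : Type*} [AddCommGroup X] [Module ℝ X]
    {Xt : Submodule ℝ X} {J₁ J₂ : X → ℝ} {N₂ : Set X} {c₂ : ℝ} {u : X}
    (hmax : ∀ t : ℝ, 0 ≤ t → ∀ v ∈ Xt, J₁ (t • u + v) ≤ J₁ u)
    (hproj : ∃ t : ℝ, 0 ≤ t ∧ ∃ v ∈ Xt, t • u + v ∈ N₂)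
    (hgap : ∀ w ∈ N₂, J₂ w < J₁ w) (hc₂ : c₂ ∈ lowerBounds (J₂ '' N₂)) :
    c₂ < J₁ u := by
  obtain ⟨t, ht, v, hv, hw⟩ := hproj
  calc c₂ ≤ J₂ (t • u + v) := hc₂ ⟨_, hw, rfl⟩
    _ < J₁ (t • u + v) := hgap _ hw
    _ ≤ J₁ u := hmax t ht v hv

theorem stmt14_general {X : Type*} [NormedAddCommGroup X] [Module ℝ X]
    (Xt : Submodule ℝ X) (I : Set ℝ) (L : ℝ)
    (J : ℝ → X → ℝ) (N : ℝ → Set X) (c : ℝ → ℝ)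
    (hN : ∀ l ∈ I, ∀ u ∈ N l, u ∉ Xt)
    (hgap : ∀ l₁ ∈ I, ∀ l₂ ∈ I, l₂ < l₁ → ∀ u : X, u ∉ Xt →
      0 < J l₁ u - J l₂ u ∧ J l₁ u - J l₂ u ≤ L * (l₁ - l₂) * ‖u‖ ^ 2)
    (hmax : ∀ l ∈ I, ∀ u ∈ N l, ∀ t : ℝ, 0 ≤ t → ∀ v ∈ Xt, J l (t • u + v) ≤ J l u)
    (hproj : ∀ l ∈ I, ∀ u : X, u ∉ Xt → ∃ t : ℝ, 0 ≤ t ∧ ∃ v ∈ Xt, t • u + v ∈ N l)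
    (hc : ∀ l ∈ I, IsGLB (J l '' N l) (c l)) :
    (∀ l₁ ∈ I, ∀ l₂ ∈ I, l₂ ≤ l₁ → c l₂ ≤ c l₁) ∧
      ((∀ l ∈ I, ∃ u ∈ N l, J l u = c l) →
        ∀ l₁ ∈ I, ∀ l₂ ∈ I, l₂ < l₁ → c l₂ < c l₁) := by
  have level_lt : ∀ l₁ ∈ I, ∀ l₂ ∈ I, l₂ < l₁ → ∀ u ∈ N l₁, c l₂ < J l₁ u :=
    fun l₁ h₁ l₂ h₂ hlt u hu =>
      lt_of_isMax_on_cone_of_mem_lowerBounds (hmax l₁ h₁ u hu)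
        (hproj l₂ h₂ u (hN l₁ h₁ u hu))
        (fun w hw => sub_pos.mp (hgap l₁ h₁ l₂ h₂ hlt w (hN l₂ h₂ w hw)).1) (hc l₂ h₂).1
  refine ⟨fun l₁ h₁ l₂ h₂ hle => ?_, fun hatt l₁ h₁ l₂ h₂ hlt => ?_⟩
  · rcases hle.eq_or_lt with rfl | hlt
    · exact le_rfl
    · exact (hc l₁ h₁).2 fun _ ⟨u, hu, hJu⟩ => hJu ▸ (level_lt l₁ h₁ l₂ h₂ hlt u hu).le
  · obtain ⟨u, hu, hJu⟩ := hatt l₁ h₁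
    exact hJu ▸ level_lt l₁ h₁ l₂ h₂ hlt u hu

/-- Monotonicity of ground state levels (Theorem 3.4): for a family `J_λ` with
`0 < J_{λ₁} - J_{λ₂} ≤ L(λ₁-λ₂)‖u‖²` off `X̃` for `λ₁ > λ₂`, Nehari–Pankov manifolds
`𝒩_λ ⊆ X \ X̃` on which every point maximizes `J_λ` over its cone `ℝ⁺u ⊕ X̃`, and such
that every `u ∉ X̃` projects into each `𝒩_λ`, the levels `c_λ = inf_{𝒩_λ} J_λ` are
non-decreasing in `λ`; if moreover every `c_λ` is attained, they are strictly increasing. -/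
theorem stmt14 {X : Type*} [NormedAddCommGroup X] [Module ℝ X]
    (Xt : Submodule ℝ X) (I : Set ℝ) (L : ℝ) (hL : 0 < L)
    (J : ℝ → X → ℝ) (N : ℝ → Set X) (c : ℝ → ℝ)
    (hN : ∀ l ∈ I, ∀ u ∈ N l, u ∉ Xt)
    (hgap : ∀ l₁ ∈ I, ∀ l₂ ∈ I, l₂ < l₁ → ∀ u : X, u ∉ Xt →
      0 < J l₁ u - J l₂ u ∧ J l₁ u - J l₂ u ≤ L * (l₁ - l₂) * ‖u‖ ^ 2)
    (hmax : ∀ l ∈ I, ∀ u ∈ N l, ∀ t : ℝ, 0 ≤ t → ∀ v ∈ Xt, J l (t • u + v) ≤ J l u)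
    (hproj : ∀ l ∈ I, ∀ u : X, u ∉ Xt → ∃ t : ℝ, 0 ≤ t ∧ ∃ v ∈ Xt, t • u + v ∈ N l)
    (hc : ∀ l ∈ I, IsGLB (J l '' N l) (c l)) :
    (∀ l₁ ∈ I, ∀ l₂ ∈ I, l₂ ≤ l₁ → c l₂ ≤ c l₁) ∧
      ((∀ l ∈ I, ∃ u ∈ N l, J l u = c l) →
        ∀ l₁ ∈ I, ∀ l₂ ∈ I, l₂ < l₁ → c l₂ < c l₁) :=
  stmt14_general Xt I L J N c hN hgap hmax hproj hc
end

section
/- Let H be a Hilbert space with norm ‖·‖, |·|_p a weaker norm with ‖u‖² ≥ S|u|_p² for all u (S > 0), and p > 2. Suppose (F_n) ⊂ H satisfies J₀'(F_n)(F_n) := ‖F_n‖² - |F_n|_p^p → 0, inf_n ‖F_n‖ > 0 and inf_n |F_n|_p > 0, and (F_n) is bounded. Then liminf_n sup_{t≥0} [(t²/2)‖F_n‖² - (t^p/p)|F_n|_p^p] ≥ (1/2 - 1/p) S^{p/(p-2)}. -/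
open Filter Topology

/-!
Along the ray `t ↦ t u` the functional `t²/2 ‖u‖² - t^p/p |u|_p^p` attains its maximum
`(1/2 - 1/p) (‖u‖² / |u|_p²)^{p/(p-2)}`, the upper bound coming from Young's inequality with the
conjugate exponents `p/2` and `p/(p-2)`. The Sobolev inequality bounds the quotient
`‖u‖² / |u|_p²` below by `S`, so every term of the sequence is at least `(1/2 - 1/p) S^{p/(p-2)}`;
the bounds `‖F n‖ ≤ M` and `δ₂ ≤ |F n|_p` keep the sequence bounded, so its `liminf` is a genuine one.
-/

section FiberEnergy

variable {p a N : ℝ}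

theorem holderConjugate_half_self (hp : 2 < p) : (p / 2).HolderConjugate (p / (p - 2)) := by
  rw [Real.holderConjugate_iff_eq_conjExponent (by linarith)]
  field_simp

theorem fiberEnergy_le (hp : 2 < p) (ha : 0 ≤ a) (hN : 0 < N) {t : ℝ} (ht : 0 ≤ t) :
    t ^ 2 / 2 * a - t ^ p / p * N ^ p ≤ (1 / 2 - 1 / p) * (a / N ^ 2) ^ (p / (p - 2)) := by
  have hyoung := Real.young_inequality_of_nonneg (sq_nonneg (t * N)) (div_nonneg ha (sq_nonneg N))
    (holderConjugate_half_self hp)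
  have hprod : (t * N) ^ 2 * (a / N ^ 2) = t ^ 2 * a := by field_simp
  have hpow : ((t * N) ^ 2) ^ (p / 2) = t ^ p * N ^ p := by
    rw [← Real.rpow_natCast, ← Real.rpow_mul (by positivity), Real.mul_rpow ht hN.le]
    congr 2 <;> push_cast <;> ring
  rw [hprod, hpow] at hyoung
  have hp0 : p ≠ 0 := by linarith
  have hp2 : p - 2 ≠ 0 := by linarith
  calc t ^ 2 / 2 * a - t ^ p / p * N ^ p
      = (t ^ 2 * a - t ^ p * N ^ p / (p / 2)) / 2 := by field_simp
    _ ≤ (a / N ^ 2) ^ (p / (p - 2)) / (p / (p - 2)) / 2 := by linarith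
    _ = (1 / 2 - 1 / p) * (a / N ^ 2) ^ (p / (p - 2)) := by field_simp

theorem fiberEnergy_critical (hp : 2 < p) (ha : 0 ≤ a) (hN : 0 < N) :
    ((a / N ^ 2) ^ (1 / (p - 2)) / N) ^ 2 / 2 * a - ((a / N ^ 2) ^ (1 / (p - 2)) / N) ^ p / p * N ^ p
      = (1 / 2 - 1 / p) * (a / N ^ 2) ^ (p / (p - 2)) := by
  set c := a / N ^ 2 with hc
  have hc0 : 0 ≤ c := by positivity
  have hp2 : p - 2 ≠ 0 := by linarith
  set s := c ^ (1 / (p - 2)) with hs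
  have hs0 : 0 ≤ s := by positivity
  have hcp : s ^ p = c ^ (p / (p - 2)) := by
    rw [hs, ← Real.rpow_mul hc0, one_div_mul_eq_div]
  have hsp : s ^ p = s ^ 2 * c := by
    have hsc : s ^ (p - 2) = c := by
      rw [hs, ← Real.rpow_mul hc0, one_div_mul_cancel hp2, Real.rpow_one]
    rw [← hsc, ← Real.rpow_two, ← Real.rpow_add' hs0 (by linarith), add_sub_cancel]
  rw [Real.div_rpow hs0 hN.le, ← hcp]
  have hsa : (s / N) ^ 2 * a = s ^ p := by rw [hsp, hc]; field_simp
  have hNp : N ^ p ≠ 0 := (Real.rpow_pos_of_pos hN p).ne'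
  calc (s / N) ^ 2 / 2 * a - s ^ p / N ^ p / p * N ^ p
      = (s / N) ^ 2 * a / 2 - s ^ p / p := by field_simp
    _ = (1 / 2 - 1 / p) * s ^ p := by rw [hsa]; ring

theorem isGreatest_fiberEnergy (hp : 2 < p) (ha : 0 ≤ a) (hN : 0 < N) :
    IsGreatest {y : ℝ | ∃ t : ℝ, 0 ≤ t ∧ y = t ^ 2 / 2 * a - t ^ p / p * N ^ p}
      ((1 / 2 - 1 / p) * (a / N ^ 2) ^ (p / (p - 2))) :=
  ⟨⟨_, by positivity, (fiberEnergy_critical hp ha hN).symm⟩,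
    fun _ ⟨_, ht, hy⟩ => hy ▸ fiberEnergy_le hp ha hN ht⟩

theorem sSup_fiberEnergy (hp : 2 < p) (ha : 0 ≤ a) (hN : 0 < N) :
    sSup {y : ℝ | ∃ t : ℝ, 0 ≤ t ∧ y = t ^ 2 / 2 * a - t ^ p / p * N ^ p}
      = (1 / 2 - 1 / p) * (a / N ^ 2) ^ (p / (p - 2)) :=
  (isGreatest_fiberEnergy hp ha hN).csSup_eq

end FiberEnergy

theorem stmt18_general {H : Type*} [NormedAddCommGroup H] (p S : ℝ) (hp : 2 < p) (hS : 0 < S)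
    (Np : H → ℝ)
    (hSob : ∀ u : H, S * Np u ^ 2 ≤ ‖u‖ ^ 2)
    (F : ℕ → H)
    (δ₂ : ℝ) (hδ₂ : 0 < δ₂) (hFn' : ∀ n, δ₂ ≤ Np (F n))
    (M : ℝ) (hM : ∀ n, ‖F n‖ ≤ M) :
    (1 / 2 - 1 / p) * S ^ (p / (p - 2)) ≤
      atTop.liminf (fun n => sSup {y : ℝ | ∃ t : ℝ, 0 ≤ t ∧
        y = t ^ 2 / 2 * ‖F n‖ ^ 2 - t ^ p / p * Np (F n) ^ p}) := by
  have hN n : 0 < Np (F n) := hδ₂.trans_le (hFn' n)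
  simp_rw [fun n => sSup_fiberEnergy hp (sq_nonneg ‖F n‖) (hN n)]
  have hcoef : 0 ≤ 1 / 2 - 1 / p := by
    rw [sub_nonneg]; gcongr
  have hlower n : S ≤ ‖F n‖ ^ 2 / Np (F n) ^ 2 := by
    rw [le_div_iff₀ (pow_pos (hN n) 2)]; exact hSob (F n)
  have hupper n : ‖F n‖ ^ 2 / Np (F n) ^ 2 ≤ M ^ 2 / δ₂ ^ 2 := by
    gcongr
    exacts [hM n, hFn' n]
  refine le_liminf_of_le (isBoundedUnder_of ⟨(1 / 2 - 1 / p) * (M ^ 2 / δ₂ ^ 2) ^ (p / (p - 2)),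
    fun n => ?_⟩).isCoboundedUnder_ge (.of_forall fun n => ?_)
  · gcongr _ * ?_ ^ _
    exact hupper n
  · gcongr _ * ?_ ^ _
    exact hlower n

/-- Quantitative step of Lemma 4.9: if `‖F_n‖² - |F_n|_p^p → 0`, with `‖F_n‖` and `|F_n|_p`
bounded away from `0`, `(F_n)` bounded, and `‖u‖² ≥ S|u|_p²` (`S > 0`, `p > 2`), then
`liminf_n sup_{t ≥ 0} [(t²/2)‖F_n‖² - (t^p/p)|F_n|_p^p] ≥ (1/2 - 1/p) S^{p/(p-2)}`. -/
theorem stmt18 {H : Type*} [NormedAddCommGroup H] (p S : ℝ) (hp : 2 < p) (hS : 0 < S)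
    (Np : H → ℝ) (hNp : ∀ u, 0 ≤ Np u)
    (hSob : ∀ u : H, S * Np u ^ 2 ≤ ‖u‖ ^ 2)
    (F : ℕ → H)
    (h0 : Tendsto (fun n => ‖F n‖ ^ 2 - Np (F n) ^ p) atTop (𝓝 0))
    (δ₁ : ℝ) (hδ₁ : 0 < δ₁) (hFn : ∀ n, δ₁ ≤ ‖F n‖)
    (δ₂ : ℝ) (hδ₂ : 0 < δ₂) (hFn' : ∀ n, δ₂ ≤ Np (F n))
    (M : ℝ) (hM : ∀ n, ‖F n‖ ≤ M) :
    (1 / 2 - 1 / p) * S ^ (p / (p - 2)) ≤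
      atTop.liminf (fun n => sSup {y : ℝ | ∃ t : ℝ, 0 ≤ t ∧
        y = t ^ 2 / 2 * ‖F n‖ ^ 2 - t ^ p / p * Np (F n) ^ p}) :=
  stmt18_general p S hp hS Np hSob F δ₂ hδ₂ hFn' M hM
end
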